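/- For any integers n, k with 0 < k < n and any p ∈ [0,1] with 0 < p < 1, one has e^{−1/(12k) − 1/(12(n−k))} < B_p(k|n) · √(2π·k(n−k)/n) · 2^{n·D(k/n ‖ p)} < 1, where B_p(k|n) := C(n,k)·p^k·(1−p)^{n−k} and D(q‖p) := q·log(q/p) + (1−q)·log((1−q)/(1−p)) with binary logarithm. -/

import Mathlib

open Real

/-- The probability of exactly `k` successes in `n` independent Bernoulli trials
with success probability `p`. -/
noncomputable def bernoulliProb (p : ℝ) (k n : ℕ) : ℝ :=
  (n.choose k : ℝ) * p ^ k * (1 - p) ^ (n - k)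

/-- The binary Kullback–Leibler divergence `D(q‖p)` (binary logarithm). -/
noncomputable def klBin (q p : ℝ) : ℝ :=
  q * Real.logb 2 (q / p) + (1 - q) * Real.logb 2 ((1 - q) / (1 - p))

/-!
Put `q = k/n`. Changing the success probability from `p` to `q` multiplies the probability of
`k` successes by `(q/p)^k ((1-q)/(1-p))^(n-k) = 2^(n D(q‖p))`, so the middle expression equals
`B_q(k|n) √(2π k(n-k)/n)`. Writing `m! = √(2πm) (m/e)^m e^{δ(m)}`, the powers cancel and this
is `exp (δ(n) - δ(k) - δ(n-k))`. The Stirling error `δ` is strictly decreasing with limit `0`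
(so positive) and satisfies Robbins' bound `δ(m) ≤ 1/(12m)`, which gives both inequalities.
-/

open Filter Topology Stirling
open scoped Nat

/-- `log (n! / (√(2πn) (n/e)^n))`: Mathlib's `stirlingSeq n` is `n! / (√(2n) (n/e)^n)`, which
tends to `√π`. -/
noncomputable def stirlingError (n : ℕ) : ℝ := log (stirlingSeq n) - log √π

lemma stirlingError_sub_succ (n : ℕ) :
    stirlingError n - stirlingError (n + 1) = log (stirlingSeq n) - log (stirlingSeq (n + 1)) := by
  simp only [stirlingError]; ring

lemma stirlingError_succ_strictAnti : StrictAnti (stirlingError ∘ Nat.succ) := by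
  refine strictAnti_nat_of_succ_lt fun m => sub_pos.mp ?_
  rw [Function.comp_apply, Function.comp_apply, stirlingError_sub_succ]
  exact hasSum_lt (f := 0) (i := 0) (fun _ => by positivity) (by positivity) hasSum_zero
    (log_stirlingSeq_sdiff_hasSum m)

lemma stirlingError_lt_of_lt {m n : ℕ} (hm : m ≠ 0) (hmn : m < n) :
    stirlingError n < stirlingError m := by
  obtain ⟨m, rfl⟩ := Nat.exists_eq_add_one.mpr (Nat.pos_of_ne_zero hm)
  obtain ⟨n, rfl⟩ := Nat.exists_eq_add_one.mpr (m.succ_pos.trans hmn)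
  exact stirlingError_succ_strictAnti (Nat.succ_lt_succ_iff.mp hmn)

lemma tendsto_stirlingError : Tendsto stirlingError atTop (𝓝 0) := by
  have h := (continuousAt_log (sqrt_pos.mpr pi_pos).ne').tendsto.comp tendsto_stirlingSeq_sqrt_pi
  rw [← sub_self (log √π)]
  exact h.sub_const _

lemma stirlingError_pos {n : ℕ} (hn : n ≠ 0) : 0 < stirlingError n := by
  obtain ⟨m, rfl⟩ := Nat.exists_eq_add_one.mpr (Nat.pos_of_ne_zero hn)
  have hlim := tendsto_stirlingError.comp (tendsto_add_atTop_nat 1)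
  exact (stirlingError_succ_strictAnti.antitone.le_of_tendsto hlim (m + 1)).trans_lt
    (stirlingError_succ_strictAnti m.lt_succ_self)

lemma stirlingError_le {n : ℕ} (hn : n ≠ 0) : stirlingError n ≤ 1 / (12 * n) := by
  obtain ⟨m, rfl⟩ := Nat.exists_eq_add_one.mpr (Nat.pos_of_ne_zero hn)
  -- Robbins' step bound makes `stirlingError n - 1/(12n)` increase, and it tends to `0`.
  let f (m : ℕ) : ℝ := stirlingError (m + 1) - 1 / 12 * (1 / ((m : ℝ) + 1))
  have hmono : Monotone f := monotone_nat_of_le_succ fun m => by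
    have h := log_stirlingSeq_sdiff_le (m + 1)
    rw [← stirlingError_sub_succ] at h
    simp only [f]; push_cast at h ⊢
    have hsplit : (1 : ℝ) / (12 * (m + 1) * (m + 1 + 1)) =
        1 / 12 * (1 / (m + 1)) - 1 / 12 * (1 / (m + 1 + 1)) := by
      field_simp; ring
    linarith
  have hlim : Tendsto f atTop (𝓝 0) := by
    simpa [f] using (tendsto_stirlingError.comp (tendsto_add_atTop_nat 1)).sub
      (tendsto_one_div_add_atTop_nhds_zero_nat.const_mul (1 / 12 : ℝ))
  have hle := hmono.ge_of_tendsto hlim m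
  simp only [f, sub_nonpos] at hle
  exact hle.trans_eq (by rw [one_div_mul_one_div]; push_cast; rfl)

lemma factorial_eq_stirling_mul_exp_stirlingError {n : ℕ} (hn : n ≠ 0) :
    (n ! : ℝ) = √(2 * π * n) * (n / exp 1) ^ n * exp (stirlingError n) := by
  have hs : 0 < stirlingSeq n := (sqrt_pos.mpr pi_pos).trans_le (sqrt_pi_le_stirlingSeq hn)
  rw [stirlingError, exp_sub, exp_log hs, exp_log (sqrt_pos.mpr pi_pos), stirlingSeq,
    show 2 * π * n = 2 * n * π by ring, sqrt_mul (by positivity)]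
  have : (0 : ℝ) < n := by positivity
  field_simp

lemma two_rpow_mul_klBin {q p : ℝ} (t : ℝ) (hq0 : 0 < q) (hq1 : q < 1) (hp0 : 0 < p)
    (hp1 : p < 1) :
    (2 : ℝ) ^ (t * klBin q p) = (q / p) ^ (t * q) * ((1 - q) / (1 - p)) ^ (t * (1 - q)) := by
  have h (x a : ℝ) (hx : 0 < x) : (2 : ℝ) ^ (a * logb 2 x) = x ^ a := by
    rw [mul_comm, rpow_mul zero_le_two, rpow_logb zero_lt_two (by norm_num) hx]
  rw [klBin, mul_add, rpow_add zero_lt_two, ← mul_assoc, ← mul_assoc, h _ _ (by positivity),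
    h _ _ (div_pos (by linarith) (by linarith))]

lemma bernoulliProb_mul_two_rpow_klBin {n k : ℕ} (hk : 0 < k) (hkn : k < n) {p : ℝ}
    (hp0 : 0 < p) (hp1 : p < 1) :
    bernoulliProb p k n * (2 : ℝ) ^ (n * klBin ((k : ℝ) / n) p) =
      bernoulliProb ((k : ℝ) / n) k n := by
  have hn : (0 : ℝ) < n := by exact_mod_cast hk.trans hkn
  have hkn' : (k : ℝ) < n := by exact_mod_cast hkn
  have hq1 : (k : ℝ) / n < 1 := (div_lt_one hn).mpr hkn'
  rw [two_rpow_mul_klBin _ (by positivity) hq1 hp0 hp1, mul_div_cancel₀ _ hn.ne',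
    show (n : ℝ) * (1 - k / n) = (n - k : ℕ) by push_cast [hkn.le]; field_simp, rpow_natCast,
    rpow_natCast, bernoulliProb, bernoulliProb]
  have : 0 < 1 - p := by linarith
  simp only [div_pow]
  field_simp

lemma bernoulliProb_div_mul_sqrt_eq_exp {n k : ℕ} (hk : 0 < k) (hkn : k < n) :
    bernoulliProb ((k : ℝ) / n) k n * √(2 * π * k * (n - k : ℕ) / n) =
      exp (stirlingError n - stirlingError k - stirlingError (n - k)) := by
  obtain ⟨m, rfl⟩ := Nat.exists_eq_add_of_le hkn.le
  have hm : m ≠ 0 := by omega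
  have hsqrt : √(2 * π * (k + m : ℕ)) * √(2 * π * k * m / (k + m : ℕ)) =
      √(2 * π * k) * √(2 * π * m) := by
    rw [← sqrt_mul (by positivity), ← sqrt_mul (by positivity)]
    congr 1
    field_simp
  rw [bernoulliProb, Nat.add_sub_cancel_left, Nat.cast_choose ℝ (Nat.le_add_right k m),
    Nat.add_sub_cancel_left, factorial_eq_stirling_mul_exp_stirlingError (by omega),
    factorial_eq_stirling_mul_exp_stirlingError hk.ne',
    factorial_eq_stirling_mul_exp_stirlingError hm, exp_sub, exp_sub]
  have h1 : (1 : ℝ) - k / (k + m : ℕ) = m / (k + m : ℕ) := by field_simp; push_cast; ring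
  rw [h1, eq_div_of_mul_eq (by positivity) hsqrt]
  simp only [div_pow, pow_add]
  field_simp

theorem bernoulli_prob_stirling_estimate
    (n k : ℕ) (hk : 0 < k) (hkn : k < n) (p : ℝ) (hp0 : 0 < p) (hp1 : p < 1) :
    Real.exp (-(1 / (12 * k)) - 1 / (12 * (n - k : ℕ)))
        < bernoulliProb p k n * Real.sqrt (2 * Real.pi * k * (n - k : ℕ) / n) *
            (2 : ℝ) ^ (n * klBin ((k : ℝ) / n) p) ∧
      bernoulliProb p k n * Real.sqrt (2 * Real.pi * k * (n - k : ℕ) / n) *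
          (2 : ℝ) ^ (n * klBin ((k : ℝ) / n) p) < 1 := by
  rw [mul_right_comm, bernoulliProb_mul_two_rpow_klBin hk hkn hp0 hp1,
    bernoulliProb_div_mul_sqrt_eq_exp hk hkn, exp_lt_exp, exp_lt_one_iff]
  have hn : n ≠ 0 := by omega
  have hnk : n - k ≠ 0 := by omega
  constructor
  · linarith [stirlingError_pos hn, stirlingError_le hk.ne', stirlingError_le hnk]
  · linarith [stirlingError_lt_of_lt hk.ne' hkn, stirlingError_pos hnk]
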